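/- Any walk in the MLA* state space from start state (s, 0, 1) to a goal state (g[K], T, K+1) visits all goal locations g[1], ..., g[K] in order: there exist times t_1 ≤ t_2 ≤ ... ≤ t_K ≤ T such that the walk is at location g[k] at time t_k with label k. -/

import Mathlib

/-!
Along a walk the time coordinate equals the step index, and the label never decreases and
grows by at most one per step, increasing from `k` to `k + 1` exactly when the walk enters
`g k`. Since the label runs from `1` to `K + 1`, for each `k ∈ [1, K]` the first index at
which the label exceeds `k` is a step from label `k` into `g k`; these first indices are
monotone in `k`.
-/

/-- The MLA* transition relation on states `(v, t, k)`: an edge from `(v, t, k)` to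
`(v', t+1, k')` iff `v' = v` or `(v, v') ∈ E`, and `k' = k + 1` if `v' = g k`,
else `k' = k`. -/
def MLAStep {V : Type*} [DecidableEq V] (G : SimpleGraph V) (g : ℕ → V) :
    V × ℕ × ℕ → V × ℕ × ℕ → Prop := fun p q =>
  q.2.1 = p.2.1 + 1 ∧ (q.1 = p.1 ∨ G.Adj p.1 q.1) ∧
    q.2.2 = if q.1 = g p.2.2 then p.2.2 + 1 else p.2.2

/-- Junk value `0` if `f` never exceeds `k`. -/
noncomputable def firstIndexAbove (f : ℕ → ℕ) (k : ℕ) : ℕ := sInf {i | k < f i}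

lemma firstIndexAbove_le {f : ℕ → ℕ} {k n : ℕ} (h : k < f n) : firstIndexAbove f k ≤ n :=
  Nat.sInf_le h

lemma firstIndexAbove_mono {f : ℕ → ℕ} {k k' n : ℕ} (hk : k ≤ k') (h : k' < f n) :
    firstIndexAbove f k ≤ firstIndexAbove f k' :=
  csInf_le_csInf (OrderBot.bddBelow _) ⟨n, h⟩ fun _ hi => lt_of_le_of_lt hk hi

/-- Discrete intermediate value theorem. -/
lemma exists_succ_eq_firstIndexAbove {f : ℕ → ℕ} {k n : ℕ}
    (hstep : ∀ i < n, f (i + 1) ≤ f i + 1) (h0 : f 0 ≤ k) (hn : k < f n) :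
    ∃ i < n, i + 1 = firstIndexAbove f k ∧ f i = k ∧ f (i + 1) = k + 1 := by
  set m := firstIndexAbove f k
  have hm_above : k < f m := Nat.sInf_mem (s := {i | k < f i}) ⟨n, hn⟩
  have hmn : m ≤ n := firstIndexAbove_le hn
  obtain ⟨i, hmi⟩ : ∃ i, m = i + 1 :=
    Nat.exists_eq_succ_of_ne_zero fun hm0 => by rw [hm0] at hm_above; omega
  have hi_not_above : ¬ k < f i :=
    Nat.notMem_of_lt_sInf (s := {i | k < f i}) (by change i < m; omega)
  have hclimb := hstep i (by omega)
  rw [hmi] at hm_above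
  exact ⟨i, by omega, hmi.symm, by omega, by omega⟩

namespace MLAStep

variable {V : Type*} [DecidableEq V] {G : SimpleGraph V} {g : ℕ → V} {p q : V × ℕ × ℕ}

lemma time_eq (h : MLAStep G g p q) : q.2.1 = p.2.1 + 1 := h.1

lemma label_le_succ (h : MLAStep G g p q) : q.2.2 ≤ p.2.2 + 1 := by
  rw [h.2.2]
  split_ifs <;> omega

lemma fst_eq_of_label_eq_succ (h : MLAStep G g p q) (hl : q.2.2 = p.2.2 + 1) :
    q.1 = g p.2.2 := by
  by_contra hne
  rw [h.2.2, if_neg hne] at hl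
  omega

end MLAStep

lemma mla_walk_time_eq_index {V : Type*} [DecidableEq V] {G : SimpleGraph V} {g : ℕ → V}
    {n : ℕ} {w : ℕ → V × ℕ × ℕ} (hstep : ∀ i < n, MLAStep G g (w i) (w (i + 1)))
    (h0 : (w 0).2.1 = 0) : ∀ i ≤ n, (w i).2.1 = i
  | 0, _ => h0
  | i + 1, hi => by
    rw [(hstep i hi).time_eq, mla_walk_time_eq_index hstep h0 i (by omega)]

theorem mla_walk_visits_goals_in_order_general {V : Type*} [DecidableEq V]
    (G : SimpleGraph V) (g : ℕ → V) (K : ℕ)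
    (s : V) (T n : ℕ) (w : ℕ → V × ℕ × ℕ)
    (hstep : ∀ i < n, MLAStep G g (w i) (w (i + 1)))
    (hstart : w 0 = (s, 0, 1)) (hend : w n = (g K, T, K + 1)) :
    ∃ τ : ℕ → ℕ, MonotoneOn τ (Set.Icc 1 K) ∧ τ K ≤ T ∧
      ∀ k ∈ Set.Icc 1 K, ∃ i, i + 1 ≤ n ∧ (w i).2.2 = k ∧
        w (i + 1) = (g k, τ k, k + 1) := by
  have htime := mla_walk_time_eq_index hstep (by simp [hstart])
  have hT : T = n := by simpa [hend] using htime n le_rfl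
  set label : ℕ → ℕ := fun i => (w i).2.2
  have hlabel_end : ∀ k ≤ K, k < label n := fun k hk => by simp [label, hend]; omega
  refine ⟨firstIndexAbove label, fun a _ b hb hab => firstIndexAbove_mono hab (hlabel_end b hb.2),
    hT ▸ firstIndexAbove_le (hlabel_end K le_rfl), ?_⟩
  rintro k ⟨hk1, hkK⟩
  obtain ⟨i, hin, hτ, hli, hli1⟩ :=
    exists_succ_eq_firstIndexAbove (fun i hi => (hstep i hi).label_le_succ)
      (by simpa [label, hstart] using hk1) (hlabel_end k hkK)
  have hloc : (w (i + 1)).1 = g (w i).2.2 :=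
    (hstep i hin).fst_eq_of_label_eq_succ (hli1.trans (congrArg (· + 1) hli.symm))
  exact ⟨i, hin, hli, Prod.ext (hli ▸ hloc) (Prod.ext (hτ ▸ htime (i + 1) hin) hli1)⟩

/-- Any walk in the MLA* state space from the start state `(s, 0, 1)` to a goal
state `(g K, T, K+1)` visits all goal locations `g 1, ..., g K` in order: there are
times `τ 1 ≤ ... ≤ τ K ≤ T` such that for each `k` the walk, while at label `k`,
arrives at location `g k` at time `τ k` (incrementing its label to `k + 1`). -/
theorem mla_walk_visits_goals_in_order {V : Type*} [DecidableEq V]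
    (G : SimpleGraph V) (g : ℕ → V) (K : ℕ) (hK : 1 ≤ K)
    (s : V) (T n : ℕ) (w : ℕ → V × ℕ × ℕ)
    (hstep : ∀ i < n, MLAStep G g (w i) (w (i + 1)))
    (hstart : w 0 = (s, 0, 1)) (hend : w n = (g K, T, K + 1)) :
    ∃ τ : ℕ → ℕ, MonotoneOn τ (Set.Icc 1 K) ∧ τ K ≤ T ∧
      ∀ k ∈ Set.Icc 1 K, ∃ i, i + 1 ≤ n ∧ (w i).2.2 = k ∧
        w (i + 1) = (g k, τ k, k + 1) :=
  mla_walk_visits_goals_in_order_general G g K s T n w hstep hstart hend
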